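/- Let T be a rose tree with n nodes and preorder listing v₁,…,v_n. For 1 ≤ i ≤ n let p_i be the position of the i-th '(' in F(T) and q_i the position of its matching ')'. Then the contiguous substring of F(T) from position p_i to position q_i (inclusive) equals F(T_i), where T_i is the subtree of T rooted at v_i. In particular, the i-th open parenthesis of F(T) belongs to the parenthesis pair corresponding to the i-th preorder node. -/

import Mathlib

/-- A rooted ordered tree (rose tree): a node together with a finite list of child subtrees. -/
inductive RoseTree where
  | node : List RoseTree → RoseTree

namespace RoseTree

mutual
/-- The folklore encoding over the alphabet {(, )}, with `true` = '(' and `false` = ')':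
`F (node [t₁,…,t_k]) = '(' ++ F t₁ ++ ⋯ ++ F t_k ++ ')'`. -/
def F : RoseTree → List Bool
  | .node ts => true :: FList ts ++ [false]
def FList : List RoseTree → List Bool
  | [] => []
  | t :: ts => F t ++ FList ts
end

mutual
/-- The list of nodes of a rose tree in preorder, where each node is identified with
its path from the root (the list of child indices taken along the way). -/
def preorderPaths : RoseTree → List (List ℕ)
  | .node ts => [] :: preorderPathsAux 0 ts
def preorderPathsAux : ℕ → List RoseTree → List (List ℕ)
  | _, [] => []
  | k, t :: ts => ((preorderPaths t).map (fun p => k :: p)) ++ preorderPathsAux (k+1) ts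
end

mutual
/-- The number of nodes of a rose tree: 1 plus the sum over children. -/
def size : RoseTree → ℕ
  | .node ts => 1 + sizeList ts
def sizeList : List RoseTree → ℕ
  | [] => 0
  | t :: ts => size t + sizeList ts
end

end RoseTree

/-- A string over {(, )} is balanced if it has equally many '(' and ')' and every
prefix has at least as many '(' as ')'. -/
def BalancedParen (s : List Bool) : Prop :=
  s.count true = s.count false ∧ ∀ k : ℕ, (s.take k).count false ≤ (s.take k).count true

/-- The contiguous substring of `S` from position `p` to position `q`, inclusive. -/
def seg (S : List Bool) (p q : ℕ) : List Bool := (S.drop p).take (q + 1 - p)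

/-- `IsMatch S p q` : the parenthesis at position `q` is the matching close parenthesis of
the open parenthesis at position `p`, i.e. `q` is the least position `> p` such that the
substring of `S` from `p` to `q` (inclusive) is balanced. -/
def IsMatch (S : List Bool) (p q : ℕ) : Prop :=
  p < q ∧ q < S.length ∧ BalancedParen (seg S p q) ∧
    ∀ r : ℕ, p < r → r < q → ¬ BalancedParen (seg S p r)

/-- `IsNthOpen S i p` : position `p` holds the `i`-th '(' of `S` (1-based `i`). -/
def IsNthOpen (S : List Bool) (i p : ℕ) : Prop :=
  p < S.length ∧ S.getD p false = true ∧ (S.take p).count true = i - 1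

/-- The subtree of a rose tree rooted at the node reached by following the given
path of child indices from the root (`none` if the path is invalid). -/
def RoseTree.subtreeAt (T : RoseTree) (path : List ℕ) : Option RoseTree :=
  path.foldl (fun ot k => ot.bind fun t => match t with | .node ts => ts[k]?) (some T)

theorem length_eq_counts (l : List Bool) : l.length = l.count true + l.count false := by
  induction l with
  | nil => simp
  | cons a l ih => simp only [List.length_cons, List.count_cons, ih]; cases a <;> simp <;> omega

namespace RoseTree

mutual
theorem count_true_F : ∀ t : RoseTree, (F t).count true = t.size
  | .node ts => by
    simp [F, size, List.count_append, List.count_cons, count_true_FList ts]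
    omega
theorem count_true_FList : ∀ ts : List RoseTree, (FList ts).count true = sizeList ts
  | [] => by simp [FList, sizeList]
  | t :: ts => by
    simp [FList, sizeList, List.count_append, count_true_F t, count_true_FList ts]
end

mutual
theorem count_eq_F : ∀ t : RoseTree, (F t).count true = (F t).count false
  | .node ts => by
    simp [F, List.count_append, List.count_cons, count_eq_FList ts]
theorem count_eq_FList : ∀ ts : List RoseTree, (FList ts).count true = (FList ts).count false
  | [] => by simp [FList]
  | t :: ts => by
    simp [FList, List.count_append, count_eq_F t, count_eq_FList ts]
end

mutual
theorem length_paths : ∀ t : RoseTree, (preorderPaths t).length = t.size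
  | .node ts => by
    simp only [preorderPaths, size, List.length_cons]
    have := length_pathsAux ts 0
    omega
theorem length_pathsAux : ∀ (ts : List RoseTree) (k : ℕ),
    (preorderPathsAux k ts).length = sizeList ts
  | [], _ => by simp [preorderPathsAux, sizeList]
  | t :: ts, k => by
    simp [preorderPathsAux, sizeList, length_paths t, length_pathsAux ts (k+1)]
end

mutual
/-- proper nonempty prefixes of `F t` have strictly more opens than closes. -/
theorem strict_F : ∀ (t : RoseTree) (m : ℕ), 1 ≤ m → m ≤ (F t).length - 1 →
    ((F t).take m).count false < ((F t).take m).count true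
  | .node ts, m, h1, h2 => by
    have hm : m - 1 ≤ (FList ts).length := by
      simp [F] at h2; omega
    obtain ⟨m', rfl⟩ : ∃ m', m = m' + 1 := ⟨m - 1, by omega⟩
    have htake : (F (node ts)).take (m' + 1) = true :: (FList ts).take m' := by
      simp only [F, List.take_succ_cons, List.cons_append]
      congr 1
      exact List.take_append_of_le_length (by omega)
    rw [htake]
    have := le_FList ts m'
    simp only [List.count_cons]
    simp
    omega
theorem le_FList : ∀ (ts : List RoseTree) (m : ℕ),
    ((FList ts).take m).count false ≤ ((FList ts).take m).count true
  | [], m => by simp [FList]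
  | t :: ts, m => by
    rcases le_or_gt m ((F t).length) with h | h
    · have htake : (FList (t :: ts)).take m = (F t).take m := by
        simp only [FList]
        exact List.take_append_of_le_length h
      rw [htake]
      rcases Nat.eq_zero_or_pos m with rfl | hm
      · simp
      rcases eq_or_lt_of_le h with rfl | hlt
      · rw [List.take_length]
        exact (count_eq_F t).ge
      · exact (strict_F t m hm (by omega)).le
    · have htake : (FList (t :: ts)).take m
          = F t ++ (FList ts).take (m - (F t).length) := by
        simp only [FList]
        rw [List.take_append, List.take_of_length_le (by omega)]
      rw [htake]
      simp only [List.count_append]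
      have := le_FList ts (m - (F t).length)
      have := count_eq_F t
      omega
end

theorem balanced_F (t : RoseTree) : BalancedParen (F t) := by
  constructor
  · exact count_eq_F t
  · intro k
    rcases Nat.eq_zero_or_pos k with rfl | hk
    · simp
    rcases le_or_gt (F t).length k with h | h
    · rw [List.take_of_length_le h]
      exact (count_eq_F t).ge
    · exact (strict_F t k hk (by omega)).le

theorem two_le_length_F (t : RoseTree) : 2 ≤ (F t).length := by
  cases t with | node ts => simp [F]

theorem F_head (t : RoseTree) : (F t)[0]? = some true := by
  cases t with | node ts => simp [F]

theorem subtreeAt_nil (t : RoseTree) : t.subtreeAt [] = some t := rfl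

theorem subtree_foldl_none (l : List ℕ) :
    l.foldl (fun (ot : Option RoseTree) k =>
      ot.bind fun t => match t with | .node ts => ts[k]?) none = none := by
  induction l with
  | nil => rfl
  | cons a l ih => exact ih

theorem subtreeAt_cons (ts : List RoseTree) (h : ℕ) (rest : List ℕ) :
    (RoseTree.node ts).subtreeAt (h :: rest)
      = (ts[h]?).bind (fun t => t.subtreeAt rest) := by
  have hrw : (RoseTree.node ts).subtreeAt (h :: rest)
      = List.foldl (fun (ot : Option RoseTree) k =>
          ot.bind fun t => match t with | .node ts => ts[k]?) (ts[h]?) rest := rfl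
  rw [hrw]
  cases hg : ts[h]? with
  | none => simpa using subtree_foldl_none rest
  | some t => rfl

mutual
theorem key : ∀ (t : RoseTree) (i : ℕ) (vi : List ℕ) (Ti : RoseTree),
    (preorderPaths t)[i]? = some vi → t.subtreeAt vi = some Ti →
    ∃ A B : List Bool, F t = A ++ F Ti ++ B ∧ A.count true = i
  | .node ts, i, vi, Ti, hget, hsub => by
    cases i with
    | zero =>
      simp only [preorderPaths, List.getElem?_cons_zero, Option.some.injEq] at hget
      subst hget
      rw [subtreeAt_nil] at hsub
      obtain rfl := Option.some.inj hsub
      exact ⟨[], [], by simp, by simp⟩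
    | succ i =>
      simp only [preorderPaths, List.getElem?_cons_succ] at hget
      obtain ⟨h', rest, t', rfl, hts, hAB⟩ := keyList ts 0 i vi Ti hget
      rw [subtreeAt_cons] at hsub
      rw [Nat.zero_add, hts] at hsub
      simp only [Option.bind_some] at hsub
      obtain ⟨A, B, hEq, hCnt⟩ := hAB hsub
      refine ⟨true :: A, B ++ [false], ?_, ?_⟩
      · simp [F, hEq]
      · simp [List.count_cons, hCnt]
theorem keyList : ∀ (ts : List RoseTree) (k i : ℕ) (vi : List ℕ) (Ti : RoseTree),
    (preorderPathsAux k ts)[i]? = some vi →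
    ∃ (h' : ℕ) (rest : List ℕ) (t' : RoseTree), vi = (k + h') :: rest ∧
      ts[h']? = some t' ∧
      (t'.subtreeAt rest = some Ti →
        ∃ A B : List Bool, FList ts = A ++ F Ti ++ B ∧ A.count true = i)
  | [], k, i, vi, Ti, hget => by simp [preorderPathsAux] at hget
  | t :: ts, k, i, vi, Ti, hget => by
    simp only [preorderPathsAux] at hget
    rcases lt_or_ge i ((preorderPaths t).map (fun p => k :: p)).length with hlt | hle
    · rw [List.getElem?_append_left hlt] at hget
      rw [List.length_map] at hlt
      rw [List.getElem?_map] at hget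
      cases hg : (preorderPaths t)[i]? with
      | none => rw [hg] at hget; simp at hget
      | some p =>
        rw [hg] at hget
        simp only [Option.map_some] at hget
        injection hget with hh
        subst hh
        refine ⟨0, p, t, by simp, by simp, ?_⟩
        intro hsub
        obtain ⟨A, B, hEq, hCnt⟩ := key t i p Ti hg hsub
        exact ⟨A, B ++ FList ts, by simp [FList, hEq], hCnt⟩
    · rw [List.getElem?_append_right hle] at hget
      rw [List.length_map] at hle
      rw [List.length_map] at hget
      obtain ⟨h', rest, t', rfl, hts, hAB⟩ :=
        keyList ts (k+1) (i - (preorderPaths t).length) vi Ti hget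
      refine ⟨h' + 1, rest, t', by rw [Nat.add_comm h' 1, ← Nat.add_assoc], by simpa using hts, ?_⟩
      intro hsub
      obtain ⟨A, B, hEq, hCnt⟩ := hAB hsub
      refine ⟨F t ++ A, B, by simp [FList, hEq], ?_⟩
      rw [List.count_append, hCnt, count_true_F, ← length_paths]
      omega
end

end RoseTree

theorem nthOpen_lt {S : List Bool} {i p p' : ℕ}
    (h : IsNthOpen S i p) (h' : IsNthOpen S i p') (hlt : p < p') : False := by
  obtain ⟨hp, hgp, hcp⟩ := h
  obtain ⟨hp', hgp', hcp'⟩ := h'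
  have hgetp : S[p]? = some true := by
    rw [List.getElem?_eq_getElem hp]
    rw [List.getD_eq_getElem S false hp] at hgp
    rw [hgp]
  have h1 : (S.take (p+1)).count true = i - 1 + 1 := by
    rw [List.take_succ, List.count_append, hcp, hgetp]
    simp
  have h2 : S.take p' = S.take (p+1) ++ (S.drop (p+1)).take (p' - (p+1)) := by
    rw [← List.take_add]
    congr 1
    omega
  rw [h2, List.count_append, h1] at hcp'
  omega

theorem nthOpen_unique {S : List Bool} {i p p' : ℕ}
    (h : IsNthOpen S i p) (h' : IsNthOpen S i p') : p = p' := by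
  rcases lt_trichotomy p p' with hlt | he | hlt
  · exact absurd (nthOpen_lt h h' hlt) id
  · exact he
  · exact absurd (nthOpen_lt h' h hlt) id

theorem isMatch_unique {S : List Bool} {p q q' : ℕ}
    (h : IsMatch S p q) (h' : IsMatch S p q') : q = q' := by
  rcases lt_trichotomy q q' with hlt | he | hlt
  · exact absurd (h'.2.2.2 q h.1 hlt h.2.2.1) id
  · exact he
  · exact absurd (h.2.2.2 q' h'.1 hlt h'.2.2.1) id

/-- Let `T` be a rose tree with `n` nodes and preorder listing `v₁,…,v_n` (nodes identified
with their paths from the root). For `1 ≤ i ≤ n` let `p_i` be the position of the `i`-th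
'(' in `F T` and `q_i` the position of its matching ')'. Then the contiguous substring of
`F T` from position `p_i` to position `q_i` (inclusive) equals `F T_i`, where `T_i` is the
subtree of `T` rooted at `v_i`. -/
theorem substring_eq_subtree_encoding (T : RoseTree) (n : ℕ) (hn : n = T.size)
    (i : ℕ) (hi1 : 1 ≤ i) (hin : i ≤ n)
    (pi qi : ℕ)
    (hpi : IsNthOpen (RoseTree.F T) i pi) (hqi : IsMatch (RoseTree.F T) pi qi)
    (vi : List ℕ) (hvi : (RoseTree.preorderPaths T)[i - 1]? = some vi)
    (Ti : RoseTree) (hTi : T.subtreeAt vi = some Ti) :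
    seg (RoseTree.F T) pi qi = RoseTree.F Ti := by
  obtain ⟨A, B, hEq, hCnt⟩ := RoseTree.key T (i-1) vi Ti hvi hTi
  have hlen2 := RoseTree.two_le_length_F Ti
  have hSlen : (RoseTree.F T).length
      = A.length + ((RoseTree.F Ti).length + B.length) := by
    rw [hEq]; simp
  have hdrop : (RoseTree.F T).drop A.length = RoseTree.F Ti ++ B := by
    rw [hEq, List.append_assoc]; exact List.drop_left
  have htake : (RoseTree.F T).take A.length = A := by
    rw [hEq, List.append_assoc]; exact List.take_left
  have hNth : IsNthOpen (RoseTree.F T) i A.length := by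
    refine ⟨by omega, ?_, by rw [htake]; exact hCnt⟩
    have hPlt : A.length < (RoseTree.F T).length := by omega
    rw [List.getD_eq_getElem _ _ hPlt]
    have : (RoseTree.F T)[A.length]? = some true := by
      rw [hEq, List.append_assoc, List.getElem?_append_right (le_refl A.length), Nat.sub_self,
        List.getElem?_append_left (by omega), RoseTree.F_head]
    rw [List.getElem?_eq_getElem hPlt] at this
    injection this
  have hpi' : pi = A.length := nthOpen_unique hpi hNth
  rw [hpi'] at hqi
  have hseg : seg (RoseTree.F T) A.length (A.length + (RoseTree.F Ti).length - 1)
      = RoseTree.F Ti := by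
    unfold seg
    rw [hdrop]
    have hq : A.length + (RoseTree.F Ti).length - 1 + 1 - A.length
        = (RoseTree.F Ti).length := by omega
    rw [hq]
    exact List.take_left
  have hMatch : IsMatch (RoseTree.F T) A.length
      (A.length + (RoseTree.F Ti).length - 1) := by
    refine ⟨by omega, by omega, by rw [hseg]; exact RoseTree.balanced_F Ti, ?_⟩
    intro r h1 h2 hbal
    have hseg' : seg (RoseTree.F T) A.length r
        = (RoseTree.F Ti).take (r + 1 - A.length) := by
      unfold seg
      rw [hdrop]
      exact List.take_append_of_le_length (by omega)
    have hstrict := RoseTree.strict_F Ti (r + 1 - A.length) (by omega) (by omega)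
    rw [hseg'] at hbal
    have := hbal.1
    omega
  have hqi' : qi = A.length + (RoseTree.F Ti).length - 1 := isMatch_unique hqi hMatch
  rw [hpi', hqi']
  exact hseg
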